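/- For H = (px²+py²+pz²)/2 + k1(x²+y²+4z²) + k2/x² + k3/y² + k4/z², with K_RL1 = −px·(z·px−x·pz) + 2k1x²z − 2k2 z/x², one has {K_RL1, H} = (2k4/z²)·(x·px/z) and {x·px/z, H} = −(1/z²)·K_RL1. -/

import Mathlib

noncomputable section

/-- Phase space ℝ⁶ with coordinates (x,y,z,px,py,pz). -/
abbrev Pt := Fin 6 → ℝ

/-- Standard basis vector. -/
def e (j : Fin 6) : Pt := Pi.single j 1

/-- Canonical Poisson bracket on ℝ⁶:
{F,G} = Σᵢ (∂F/∂qᵢ ∂G/∂pᵢ − ∂F/∂pᵢ ∂G/∂qᵢ). -/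
def pb (F G : Pt → ℝ) (q : Pt) : ℝ :=
    (fderiv ℝ F q (e 0)) * (fderiv ℝ G q (e 3)) - (fderiv ℝ F q (e 3)) * (fderiv ℝ G q (e 0))
  + (fderiv ℝ F q (e 1)) * (fderiv ℝ G q (e 4)) - (fderiv ℝ F q (e 4)) * (fderiv ℝ G q (e 1))
  + (fderiv ℝ F q (e 2)) * (fderiv ℝ G q (e 5)) - (fderiv ℝ F q (e 5)) * (fderiv ℝ G q (e 2))

/-- H = (px²+py²+pz²)/2 + k1(x²+y²+4z²) + k2/x² + k3/y² + k4/z². -/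
def Ham (k1 k2 k3 k4 : ℝ) (q : Pt) : ℝ :=
  (q 3 ^ 2 + q 4 ^ 2 + q 5 ^ 2) / 2 + k1 * (q 0 ^ 2 + q 1 ^ 2 + 4 * q 2 ^ 2)
    + k2 / q 0 ^ 2 + k3 / q 1 ^ 2 + k4 / q 2 ^ 2

/-- K_RL1 = −px·(z px − x pz) + 2k1 x² z − 2k2 z/x². -/
def KRL1 (k1 k2 : ℝ) (q : Pt) : ℝ :=
  -(q 3 * (q 2 * q 3 - q 0 * q 5)) + 2 * k1 * q 0 ^ 2 * q 2 - 2 * k2 * q 2 / q 0 ^ 2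

/-! The brackets are computed from explicit differentials: those of `H`, `K_RL1` and `x·px/z`
follow from the chain rule away from the coordinate hyperplanes, and both identities are then
rational identities in the coordinates. -/

section Quotient

variable {𝕜 E : Type*} [NontriviallyNormedField 𝕜] [NormedAddCommGroup E] [NormedSpace 𝕜 E]
  {c d : E → 𝕜} {c' d' : E →L[𝕜] 𝕜} {x : E}

theorem HasFDerivAt.div (hc : HasFDerivAt c c' x) (hd : HasFDerivAt d d' x) (hx : d x ≠ 0) :
    HasFDerivAt (fun y => c y / d y) ((d x)⁻¹ • c' - (c x / d x ^ 2) • d') x := by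
  have hinv : HasFDerivAt (fun y => (d y)⁻¹) ((-(d x ^ 2)⁻¹) • d') x :=
    (hasDerivAt_inv hx).comp_hasFDerivAt x hd
  simp only [div_eq_mul_inv]
  refine (hc.fun_mul hinv).congr_fderiv ?_
  ext v
  simp only [add_apply, smul_apply, smul_eq_mul, sub_apply]
  ring

end Quotient

section Coordinates

variable {ι : Type*} [Fintype ι] (q : ι → ℝ) (i : ι)

theorem hasFDerivAt_apply_sq :
    HasFDerivAt (fun p : ι → ℝ => p i ^ 2)
      ((2 * q i) • (ContinuousLinearMap.proj i : (ι → ℝ) →L[ℝ] ℝ)) q := by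
  simpa using (hasFDerivAt_apply (𝕜 := ℝ) i q).pow (𝔸 := ℝ) 2

theorem hasFDerivAt_const_div_apply_sq (k : ℝ) (hi : q i ≠ 0) :
    HasFDerivAt (fun p : ι → ℝ => k / p i ^ 2)
      ((-2 * k / q i ^ 3) • (ContinuousLinearMap.proj i : (ι → ℝ) →L[ℝ] ℝ)) q := by
  refine ((hasFDerivAt_const k q).div (hasFDerivAt_apply_sq q i)
    (pow_ne_zero 2 hi)).congr_fderiv ?_
  ext v
  simp only [smul_zero, zero_sub, neg_apply, smul_apply, ContinuousLinearMap.proj_apply, smul_eq_mul]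
  field_simp

end Coordinates

section Differentials

variable {q : Pt}

theorem fderiv_Ham_apply (k1 k2 k3 k4 : ℝ) (hx : q 0 ≠ 0) (hy : q 1 ≠ 0) (hz : q 2 ≠ 0) (v : Pt) :
    fderiv ℝ (Ham k1 k2 k3 k4) q v =
      q 3 * v 3 + q 4 * v 4 + q 5 * v 5 + 2 * k1 * (q 0 * v 0 + q 1 * v 1 + 4 * q 2 * v 2)
        - 2 * k2 * v 0 / q 0 ^ 3 - 2 * k3 * v 1 / q 1 ^ 3 - 2 * k4 * v 2 / q 2 ^ 3 := by
  have sq := hasFDerivAt_apply_sq q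
  have hH : HasFDerivAt (Ham k1 k2 k3 k4) _ q :=
    (((((sq 3).add (sq 4)).add (sq 5)).div (hasFDerivAt_const 2 q) two_ne_zero).add
      ((((sq 0).add (sq 1)).add ((sq 2).const_mul 4)).const_mul k1)).add
      (hasFDerivAt_const_div_apply_sq q 0 k2 hx) |>.add
      (hasFDerivAt_const_div_apply_sq q 1 k3 hy) |>.add (hasFDerivAt_const_div_apply_sq q 2 k4 hz)
  rw [hH.fderiv]
  simp only [smul_add, Pi.add_apply, smul_zero, sub_zero, add_apply, smul_apply,
    ContinuousLinearMap.proj_apply, smul_eq_mul]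
  ring

theorem fderiv_KRL1_apply (k1 k2 : ℝ) (hx : q 0 ≠ 0) (v : Pt) :
    fderiv ℝ (KRL1 k1 k2) q v =
      -(v 3 * (q 2 * q 3 - q 0 * q 5) + q 3 * (v 2 * q 3 + q 2 * v 3 - v 0 * q 5 - q 0 * v 5))
        + 2 * k1 * (2 * q 0 * v 0 * q 2 + q 0 ^ 2 * v 2)
        - 2 * k2 * (v 2 / q 0 ^ 2 - 2 * q 2 * v 0 / q 0 ^ 3) := by
  have c (i : Fin 6) := hasFDerivAt_apply (𝕜 := ℝ) i q
  have hK : HasFDerivAt (KRL1 k1 k2) _ q :=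
    (((c 3).fun_mul (((c 2).fun_mul (c 3)).fun_sub ((c 0).fun_mul (c 5)))).fun_neg.fun_add
      (((hasFDerivAt_apply_sq q 0).const_mul (2 * k1)).fun_mul (c 2))).fun_sub
      (((c 2).const_mul (2 * k2)).div (hasFDerivAt_apply_sq q 0) (pow_ne_zero 2 hx))
  rw [hK.fderiv]
  simp only [sub_apply, add_apply, neg_apply, smul_apply, ContinuousLinearMap.proj_apply, smul_eq_mul]
  field_simp
  ring

theorem fderiv_mul_div_apply (hz : q 2 ≠ 0) (v : Pt) :
    fderiv ℝ (fun p : Pt => p 0 * p 3 / p 2) q v =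
      (v 0 * q 3 + q 0 * v 3) / q 2 - q 0 * q 3 * v 2 / q 2 ^ 2 := by
  have c (i : Fin 6) := hasFDerivAt_apply (𝕜 := ℝ) i q
  rw [(((c 0).fun_mul (c 3)).div (c 2) hz).fderiv]
  simp only [smul_add, sub_apply, add_apply, smul_apply, ContinuousLinearMap.proj_apply, smul_eq_mul]
  ring

end Differentials

theorem stmt8 (k1 k2 k3 k4 : ℝ) :
    ∀ q : Pt, q 0 ≠ 0 → q 1 ≠ 0 → q 2 ≠ 0 →
      pb (KRL1 k1 k2) (Ham k1 k2 k3 k4) q = (2 * k4 / q 2 ^ 2) * (q 0 * q 3 / q 2) ∧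
      pb (fun p => p 0 * p 3 / p 2) (Ham k1 k2 k3 k4) q = -(1 / q 2 ^ 2) * KRL1 k1 k2 q := by
  intro q hx hy hz
  simp only [pb, fderiv_Ham_apply k1 k2 k3 k4 hx hy hz, fderiv_KRL1_apply k1 k2 hx,
    fderiv_mul_div_apply hz, KRL1, e, Pi.single_apply, Fin.reduceEq, if_true, if_false]
  constructor <;> field_simp <;> ring
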